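/- arXiv:2002.09050 — 2 statements merged into one kernel-verified Lean document; each statement's English description precedes it below -/
import Mathlib

section
/- (Lemma 1) Let f be p-times differentiable with L_p-Lipschitz p-th derivative, H_p > 0, γ ∈ [0,1), and suppose T ∈ ℝⁿ satisfies ‖∇_y Ω̃_{p,H_p}(f,x;T)‖ ≤ γ‖∇f(T)‖. Then (1−γ)‖∇f(T)‖ ≤ ((p+1)H_p + L_p)/p! · ‖T − x‖^p, and consequently ‖∇_y Ω̃_{p,H_p}(f,x;T)‖ ≤ γ/(1−γ) · ((p+1)H_p + L_p)/p! · ‖T − x‖^p. -/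
/-!
Differentiating the Taylor polynomial `Ω_p(f, x; ·)` gives the Taylor polynomial of degree `p - 1`
of `Df` at `x`, so the Taylor remainder estimate for `Df` (whose `(p-1)`-th derivative is
`L`-Lipschitz) yields `‖∇f(T) - ∇Ω_p(f, x; T)‖ ≤ L/p! ‖T - x‖^p`; the regularizer contributes at most
`(p+1) H/p! ‖T - x‖^p` to the gradient. With `‖∇Ω̃(T)‖ ≤ γ ‖∇f(T)‖` the triangle inequality gives
`(1 - γ) ‖∇f(T)‖ ≤ ((p+1) H + L)/p! ‖T - x‖^p`, and the second bound follows by dividing by `1 - γ`.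

The remainder estimate is proved by induction on the order: the remainder of `f` has the remainder
of `Df` as derivative, and a derivative bound `C ‖y - x‖^k` integrates along the segment from `x`
to `C/(k+1) ‖y - x‖^(k+1)`. Differentiating `D^k f(x)[u, …, u]` in `u` needs the symmetry of
`D^k f(x)`, which reduces to the symmetry of second derivatives.
-/

open Finset
open scoped Nat

universe u

-- One universe for `E` and `G`: the inductions below replace `G` by `E →L[ℝ] G`.
variable {E G : Type u} [NormedAddCommGroup E] [NormedSpace ℝ E]
  [NormedAddCommGroup G] [NormedSpace ℝ G]

theorem iteratedFDeriv_fderiv_fderiv_apply_comm {k : ℕ} {f : E → G}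
    (hf : ContDiff ℝ (k + 2) f) (x : E) (m : Fin k → E) (v w : E) :
    iteratedFDeriv ℝ k (fderiv ℝ (fderiv ℝ f)) x m v w
      = iteratedFDeriv ℝ k (fderiv ℝ (fderiv ℝ f)) x m w v := by
  let flip : (E →L[ℝ] E →L[ℝ] G) ≃L[ℝ] (E →L[ℝ] E →L[ℝ] G) :=
    (ContinuousLinearMap.flipₗᵢ ℝ E E G).toContinuousLinearEquiv
  have hsymm : flip ∘ fderiv ℝ (fderiv ℝ f) = fderiv ℝ (fderiv ℝ f) := by
    funext y
    ext v w
    exact (hf.contDiffAt.isSymmSndFDerivAt (by simp [minSmoothness_of_isRCLikeNormedField])) w v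
  have h := ContinuousLinearEquiv.iteratedFDeriv_comp_left (𝕜 := ℝ) (G := E →L[ℝ] E →L[ℝ] G)
    (f := fderiv ℝ (fderiv ℝ f)) (x := x) (i := k) flip
  rw [hsymm] at h
  exact congrArg (fun A => A m v w) h

theorem hasFDerivAt_iteratedFDeriv_apply_const (k : ℕ) {f : E → G}
    (hf : ContDiff ℝ (k + 1) f) (x u : E) :
    HasFDerivAt (fun u => iteratedFDeriv ℝ (k + 1) f x (fun _ => u))
      (((k : ℝ) + 1) • iteratedFDeriv ℝ k (fderiv ℝ f) x (fun _ => u)) u := by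
  induction k generalizing G with
  | zero =>
    simpa [iteratedFDeriv_succ_apply_right] using (fderiv ℝ f x).hasFDerivAt (x := u)
  | succ k ih =>
    have hDf : ContDiff ℝ (k + 1) (fderiv ℝ f) := hf.fderiv_right (by push_cast; rfl)
    have h := (ih hDf).clm_apply (hasFDerivAt_id u)
    refine (h.congr_fderiv ?_).congr_of_eventuallyEq
      (Filter.Eventually.of_forall fun w => iteratedFDeriv_succ_apply_right _)
    ext v
    have hcomm := iteratedFDeriv_fderiv_fderiv_apply_comm (k := k) hf x (fun _ => u) u v
    set A := iteratedFDeriv ℝ k (fderiv ℝ (fderiv ℝ f)) x (fun _ => u)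
    have hA : iteratedFDeriv ℝ (k + 1) (fderiv ℝ f) x (fun _ => u) = A u :=
      iteratedFDeriv_succ_apply_right _
    simp only [hA, add_apply, ContinuousLinearMap.comp_apply, ContinuousLinearMap.flip_apply,
      smul_apply, ContinuousLinearMap.coe_id', id_eq]
    rw [← hcomm]
    push_cast
    module

-- `taylorPoly f p x z` is the paper's `Ω_p(f, x; z)`.
noncomputable def taylorPoly (f : E → G) (p : ℕ) (x z : E) : G :=
  ∑ k ∈ range (p + 1), (k ! : ℝ)⁻¹ • iteratedFDeriv ℝ k f x (fun _ => z - x)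

@[simp]
theorem taylorPoly_self (f : E → G) (p : ℕ) (x : E) : taylorPoly f p x x = f x := by
  have hzero (k : ℕ) : iteratedFDeriv ℝ (k + 1) f x (fun _ => 0) = 0 :=
    (iteratedFDeriv ℝ (k + 1) f x).map_zero
  simp [taylorPoly, sum_range_succ', iteratedFDeriv_zero_apply, hzero]

theorem hasFDerivAt_taylorPoly_succ {m : ℕ} {f : E → G} (hf : ContDiff ℝ (m + 1) f) (x z : E) :
    HasFDerivAt (taylorPoly f (m + 1) x) (taylorPoly (fderiv ℝ f) m x z) z := by
  have hterm : ∀ j ∈ range (m + 1), HasFDerivAt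
      (fun z => ((j + 1)! : ℝ)⁻¹ • iteratedFDeriv ℝ (j + 1) f x (fun _ => z - x))
      ((j ! : ℝ)⁻¹ • iteratedFDeriv ℝ j (fderiv ℝ f) x (fun _ => z - x)) z := by
    intro j hj
    have hfj : ContDiff ℝ (j + 1) f := hf.of_le (by exact_mod_cast mem_range.1 hj)
    have h := ((hasFDerivAt_iteratedFDeriv_apply_const j hfj x (z - x)).comp z
      ((hasFDerivAt_id z).sub_const x)).const_smul ((j + 1)! : ℝ)⁻¹
    refine h.congr_fderiv ?_
    rw [ContinuousLinearMap.comp_id, smul_smul, Nat.factorial_succ, Nat.cast_mul]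
    congr 1
    field_simp
    push_cast
    ring
  unfold taylorPoly
  simp_rw [sum_range_succ' _ (m + 1), iteratedFDeriv_zero_apply]
  exact (HasFDerivAt.fun_sum hterm).add_const _

theorem norm_le_of_hasFDerivAt_of_norm_le_pow {R : E → G} {R' : E → E →L[ℝ] G} {x : E} {C : ℝ}
    {k : ℕ} (hR : ∀ y, HasFDerivAt R (R' y) y) (hRx : R x = 0)
    (hR' : ∀ y, ‖R' y‖ ≤ C * ‖y - x‖ ^ k) (y : E) :
    ‖R y‖ ≤ C / (k + 1) * ‖y - x‖ ^ (k + 1) := by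
  set u := y - x
  have hline (t : ℝ) : HasDerivAt (fun t : ℝ => R (x + t • u)) (R' (x + t • u) u) t :=
    (hR _).comp_hasDerivAt t (by simpa using ((hasDerivAt_id t).smul_const u).const_add x)
  have hB (t : ℝ) : HasDerivAt (fun t : ℝ => C / (k + 1) * ‖u‖ ^ (k + 1) * t ^ (k + 1))
      (C * ‖u‖ ^ (k + 1) * t ^ k) t := by
    refine ((hasDerivAt_pow (k + 1) t).const_mul (C / (k + 1) * ‖u‖ ^ (k + 1))).congr_deriv ?_
    push_cast
    field_simp
  have hbound : ∀ t ∈ Set.Ico (0 : ℝ) 1, ‖R' (x + t • u) u‖ ≤ C * ‖u‖ ^ (k + 1) * t ^ k := by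
    intro t ht
    calc ‖R' (x + t • u) u‖ ≤ ‖R' (x + t • u)‖ * ‖u‖ := (R' _).le_opNorm u
      _ ≤ C * ‖t • u‖ ^ k * ‖u‖ := by gcongr; simpa using hR' (x + t • u)
      _ = C * ‖u‖ ^ (k + 1) * t ^ k := by
        rw [norm_smul, Real.norm_of_nonneg ht.1]
        ring
  have h := image_norm_le_of_norm_deriv_right_le_deriv_boundary
    (fun t _ => (hline t).continuousAt.continuousWithinAt) (fun t _ => (hline t).hasDerivWithinAt)
    (by simp [hRx]) hB hbound (Set.right_mem_Icc.2 zero_le_one)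
  simpa [u] using h

theorem norm_iteratedFDeriv_zero_sub (f : E → G) (a b : E) :
    ‖iteratedFDeriv ℝ 0 f a - iteratedFDeriv ℝ 0 f b‖ = ‖f a - f b‖ := by
  simp only [iteratedFDeriv_zero_eq_comp, Function.comp_apply, ← map_sub,
    LinearIsometryEquiv.norm_map]

theorem norm_iteratedFDeriv_fderiv_sub (m : ℕ) (f : E → G) (a b : E) :
    ‖iteratedFDeriv ℝ m (fderiv ℝ f) a - iteratedFDeriv ℝ m (fderiv ℝ f) b‖
      = ‖iteratedFDeriv ℝ (m + 1) f a - iteratedFDeriv ℝ (m + 1) f b‖ := by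
  simp only [iteratedFDeriv_succ_eq_comp_right, Function.comp_apply]
  rw [← LinearIsometryEquiv.map_sub, LinearIsometryEquiv.norm_map]

theorem norm_sub_taylorPoly_le {m : ℕ} {f : E → G} {L : ℝ} (hf : ContDiff ℝ m f)
    (hL : ∀ a b, ‖iteratedFDeriv ℝ m f a - iteratedFDeriv ℝ m f b‖ ≤ L * ‖a - b‖) (x y : E) :
    ‖f y - taylorPoly f m x y‖ ≤ L / (m + 1)! * ‖y - x‖ ^ (m + 1) := by
  induction m generalizing G y with
  | zero =>
    simpa [taylorPoly, iteratedFDeriv_zero_apply, norm_iteratedFDeriv_zero_sub] using hL y x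
  | succ m ih =>
    have hDf : ContDiff ℝ m (fderiv ℝ f) := hf.fderiv_right (by push_cast; rfl)
    have hDfL : ∀ a b, ‖iteratedFDeriv ℝ m (fderiv ℝ f) a - iteratedFDeriv ℝ m (fderiv ℝ f) b‖
        ≤ L * ‖a - b‖ := fun a b => (norm_iteratedFDeriv_fderiv_sub m f a b).trans_le (hL a b)
    have hR (z : E) : HasFDerivAt (fun z => f z - taylorPoly f (m + 1) x z)
        (fderiv ℝ f z - taylorPoly (fderiv ℝ f) m x z) z :=
      ((hf.differentiable (by simp)).differentiableAt.hasFDerivAt).sub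
        (hasFDerivAt_taylorPoly_succ hf x z)
    refine (norm_le_of_hasFDerivAt_of_norm_le_pow hR (by simp) (ih hDf hDfL) y).trans_eq ?_
    rw [Nat.factorial_succ (m + 1)]
    push_cast
    field_simp

section InnerProductSpace

variable {F : Type*} [NormedAddCommGroup F] [InnerProductSpace ℝ F]

theorem norm_gradient [CompleteSpace F] (f : F → ℝ) (x : F) :
    ‖gradient f x‖ = ‖fderiv ℝ f x‖ := by
  rw [← toDual_gradient, LinearIsometryEquiv.norm_map]

theorem differentiableAt_norm_sub_pow {p : ℕ} (hp : 1 < p) (x z : F) :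
    DifferentiableAt ℝ (fun z : F => ‖z - x‖ ^ p) z := by
  simp only [← Real.rpow_natCast]
  exact (differentiableAt_comp_sub (f := fun y : F => ‖y‖ ^ (p : ℝ)) x).2
    (differentiable_norm_rpow (by exact_mod_cast hp) _)

theorem norm_fderiv_norm_sub_pow {p : ℕ} (hp : 1 < p) (x z : F) :
    ‖fderiv ℝ (fun z : F => ‖z - x‖ ^ p) z‖ = p * ‖z - x‖ ^ (p - 1) := by
  simp only [← Real.rpow_natCast]
  rw [fderiv_comp_sub (f := fun y : F => ‖y‖ ^ (p : ℝ)),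
    norm_fderiv_norm_id_rpow _ (by exact_mod_cast hp), Nat.cast_sub hp.le, Nat.cast_one]

end InnerProductSpace

-- `regularizedTaylorPoly f p H x z` is the paper's `Ω̃_{p,H}(f, x; z)`.
noncomputable def regularizedTaylorPoly {F : Type} [NormedAddCommGroup F] [NormedSpace ℝ F]
    (f : F → ℝ) (p : ℕ) (H : ℝ) (x z : F) : ℝ :=
  taylorPoly f p x z + H / p ! * ‖z - x‖ ^ (p + 1)

theorem norm_fderiv_sub_fderiv_regularizedTaylorPoly_le {F : Type} [NormedAddCommGroup F]
    [InnerProductSpace ℝ F] {p : ℕ} {f : F → ℝ} {L H : ℝ} (hp : 0 < p) (hH : 0 ≤ H)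
    (hf : ContDiff ℝ p f)
    (hL : ∀ a b, ‖iteratedFDeriv ℝ p f a - iteratedFDeriv ℝ p f b‖ ≤ L * ‖a - b‖) (x T : F) :
    ‖fderiv ℝ f T - fderiv ℝ (regularizedTaylorPoly f p H x) T‖
      ≤ ((p + 1) * H + L) / p ! * ‖T - x‖ ^ p := by
  obtain ⟨m, rfl⟩ : ∃ m, p = m + 1 := ⟨p - 1, by omega⟩
  have hpow : 1 < m + 1 + 1 := by omega
  set W := fderiv ℝ (fun z => ‖z - x‖ ^ (m + 1 + 1)) T
  have hΩ : HasFDerivAt (regularizedTaylorPoly f (m + 1) H x)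
      (taylorPoly (fderiv ℝ f) m x T + (H / (m + 1)! : ℝ) • W) T :=
    (hasFDerivAt_taylorPoly_succ hf x T).fun_add
      ((differentiableAt_norm_sub_pow hpow x T).hasFDerivAt.const_mul (H / (m + 1)!))
  have htaylor : ‖fderiv ℝ f T - taylorPoly (fderiv ℝ f) m x T‖ ≤ L / (m + 1)! * ‖T - x‖ ^ (m + 1) :=
    norm_sub_taylorPoly_le (hf.fderiv_right (by push_cast; rfl))
      (fun a b => (norm_iteratedFDeriv_fderiv_sub m f a b).trans_le (hL a b)) x T
  have hW : ‖(H / (m + 1)! : ℝ) • W‖ = H / (m + 1)! * ((m + 1 + 1) * ‖T - x‖ ^ (m + 1)) := by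
    rw [norm_smul, norm_fderiv_norm_sub_pow hpow, Real.norm_of_nonneg (by positivity)]
    push_cast
    rfl
  rw [hΩ.fderiv]
  calc ‖fderiv ℝ f T - (taylorPoly (fderiv ℝ f) m x T + (H / (m + 1)! : ℝ) • W)‖
      ≤ ‖fderiv ℝ f T - taylorPoly (fderiv ℝ f) m x T‖ + ‖(H / (m + 1)! : ℝ) • W‖ := by
        rw [← sub_sub]
        exact norm_sub_le _ _
    _ ≤ ((↑(m + 1) + 1) * H + L) / (m + 1)! * ‖T - x‖ ^ (m + 1) := by
        rw [hW]
        refine (add_le_add htaylor le_rfl).trans_eq ?_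
        push_cast
        ring

theorem stmt_3 (n p : ℕ) (hp : 1 ≤ p) (L Hp γ : ℝ) (hHp : 0 < Hp)
    (hγ0 : 0 ≤ γ) (hγ1 : γ < 1)
    (f : EuclideanSpace ℝ (Fin n) → ℝ)
    (hf : ContDiff ℝ p f)
    (hL : ∀ x y : EuclideanSpace ℝ (Fin n),
      ‖iteratedFDeriv ℝ p f x - iteratedFDeriv ℝ p f y‖ ≤ L * ‖x - y‖)
    (x T : EuclideanSpace ℝ (Fin n))
    (hT : ‖gradient (fun z => (∑ k ∈ Finset.range (p + 1),
          (1 / (Nat.factorial k : ℝ)) * iteratedFDeriv ℝ k f x (fun _ => z - x))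
        + Hp / (Nat.factorial p : ℝ) * ‖z - x‖ ^ (p + 1)) T‖ ≤ γ * ‖gradient f T‖) :
    (1 - γ) * ‖gradient f T‖ ≤ ((p + 1) * Hp + L) / (Nat.factorial p : ℝ) * ‖T - x‖ ^ p
    ∧ ‖gradient (fun z => (∑ k ∈ Finset.range (p + 1),
          (1 / (Nat.factorial k : ℝ)) * iteratedFDeriv ℝ k f x (fun _ => z - x))
        + Hp / (Nat.factorial p : ℝ) * ‖z - x‖ ^ (p + 1)) T‖
      ≤ γ / (1 - γ) * (((p + 1) * Hp + L) / (Nat.factorial p : ℝ)) * ‖T - x‖ ^ p := by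
  have hmodel : (fun z => (∑ k ∈ Finset.range (p + 1),
        (1 / (Nat.factorial k : ℝ)) * iteratedFDeriv ℝ k f x (fun _ => z - x))
        + Hp / (Nat.factorial p : ℝ) * ‖z - x‖ ^ (p + 1))
      = regularizedTaylorPoly f p Hp x := by
    funext z
    simp only [regularizedTaylorPoly, taylorPoly, one_div, smul_eq_mul]
  have hgap := norm_fderiv_sub_fderiv_regularizedTaylorPoly_le hp hHp.le hf hL x T
  rw [hmodel, norm_gradient, norm_gradient] at hT ⊢
  have hf_le := norm_le_norm_add_norm_sub' (fderiv ℝ f T)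
    (fderiv ℝ (regularizedTaylorPoly f p Hp x) T)
  have hmain : (1 - γ) * ‖fderiv ℝ f T‖ ≤ ((p + 1) * Hp + L) / p ! * ‖T - x‖ ^ p := by
    linarith
  refine ⟨hmain, hT.trans ?_⟩
  calc γ * ‖fderiv ℝ f T‖ ≤ γ * ((((p + 1) * Hp + L) / p ! * ‖T - x‖ ^ p) / (1 - γ)) := by
        gcongr
        rwa [le_div_iff₀ (by linarith), mul_comm]
    _ = γ / (1 - γ) * (((p + 1) * Hp + L) / p !) * ‖T - x‖ ^ p := by ring
end

section
/- Let f be convex and three times differentiable with L_3-Lipschitz third derivative, and fix x̃. The function φ(z) = ⟨∇f(x̃), z−x̃⟩ + (1/2)∇²f(x̃)[z−x̃]² + (1/6)D³f(x̃)[z−x̃]³ + (L_3/4)‖z−x̃‖⁴, with the regularization coefficient M ≥ L_3 replacing L_3 in the last term (i.e. coefficient M/4 with M ≥ L_3), is convex. -/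
/-!
Along a line `z = x + t • d` the model is a quartic polynomial in `t`; with `h = z - x̃`,
`B = D²f(x̃)` and `C = D³f(x̃)` its second derivative is
`B d d + C h d d + M (2 ⟪h, d⟫² + ‖h‖² ‖d‖²)`. Convexity of `f` gives `D²f(x̃ + h) d d ≥ 0`,
and the Lipschitz bound on `D³f` together with the mean value theorem gives
`D²f(x̃ + h) d d ≤ B d d + C h d d + L ‖h‖² ‖d‖²`. Hence the second derivative is at least
`(M - L) ‖h‖² ‖d‖² + 2 M ⟪h, d⟫² ≥ 0`.
-/

open RealInnerProductSpace

open Set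

theorem convexOn_univ_iff_forall_line {E : Type*} [AddCommGroup E] [Module ℝ E] {φ : E → ℝ} :
    ConvexOn ℝ univ φ ↔ ∀ x d : E, ConvexOn ℝ univ fun t : ℝ => φ (x + t • d) := by
  refine ⟨fun h x d => ?_, fun h => ⟨convex_univ, fun x _ y _ a b ha hb hab => ?_⟩⟩
  · simpa [Function.comp_def, AffineMap.lineMap_apply_module', add_comm] using
      h.comp_affineMap (AffineMap.lineMap x (x + d))
  · have hcomb : a • x + b • y = x + (a • (0 : ℝ) + b • (1 : ℝ)) • (y - x) := by
      rw [eq_sub_of_add_eq hab]; simp only [smul_eq_mul]; module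
    simpa [hcomb] using (h x (y - x)).2 (mem_univ 0) (mem_univ 1) ha hb hab

theorem convexOn_univ_quartic {c₀ c₁ c₂ c₃ c₄ : ℝ}
    (h : ∀ t, 0 ≤ 2 * c₂ + 6 * c₃ * t + 12 * c₄ * t ^ 2) :
    ConvexOn ℝ univ fun t : ℝ => c₀ + c₁ * t + c₂ * t ^ 2 + c₃ * t ^ 3 + c₄ * t ^ 4 := by
  have h₁ : ∀ t : ℝ, HasDerivAt (fun t => c₀ + c₁ * t + c₂ * t ^ 2 + c₃ * t ^ 3 + c₄ * t ^ 4)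
      (c₁ + 2 * c₂ * t + 3 * c₃ * t ^ 2 + 4 * c₄ * t ^ 3) t := fun t =>
    (((((hasDerivAt_const t c₀).add ((hasDerivAt_id t).const_mul c₁)).add
      ((hasDerivAt_pow 2 t).const_mul c₂)).add ((hasDerivAt_pow 3 t).const_mul c₃)).add
      ((hasDerivAt_pow 4 t).const_mul c₄)).congr_deriv (by push_cast; ring)
  have h₂ : ∀ t : ℝ, HasDerivAt (fun t => c₁ + 2 * c₂ * t + 3 * c₃ * t ^ 2 + 4 * c₄ * t ^ 3)
      (2 * c₂ + 6 * c₃ * t + 12 * c₄ * t ^ 2) t := fun t =>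
    ((((hasDerivAt_const t c₁).add ((hasDerivAt_id t).const_mul (2 * c₂))).add
      ((hasDerivAt_pow 2 t).const_mul (3 * c₃))).add
      ((hasDerivAt_pow 3 t).const_mul (4 * c₄))).congr_deriv (by push_cast; ring)
  exact convexOn_of_hasDerivWithinAt2_nonneg convex_univ
    (fun t _ => (h₁ t).continuousAt.continuousWithinAt) (fun t _ => (h₁ t).hasDerivWithinAt)
    (fun t _ => (h₂ t).hasDerivWithinAt) fun t _ => h t

section Derivatives

theorem iteratedFDeriv_three_apply {𝕜 E F : Type*} [NontriviallyNormedField 𝕜]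
    [NormedAddCommGroup E] [NormedSpace 𝕜 E] [NormedAddCommGroup F] [NormedSpace 𝕜 F]
    (f : E → F) (z : E) (m : Fin 3 → E) :
    iteratedFDeriv 𝕜 3 f z m = fderiv 𝕜 (fderiv 𝕜 (fderiv 𝕜 f)) z (m 0) (m 1) (m 2) := by
  rw [iteratedFDeriv_succ_apply_right, iteratedFDeriv_two_apply]
  rfl

variable {E F : Type*} [NormedAddCommGroup E] [NormedSpace ℝ E] [NormedAddCommGroup F]
  [NormedSpace ℝ F]

theorem HasFDerivAt.hasDerivAt_comp_line {Φ : E → F} {Φ' : E →L[ℝ] F} {x d : E} {t : ℝ}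
    (hΦ : HasFDerivAt Φ Φ' (x + t • d)) : HasDerivAt (fun s : ℝ => Φ (x + s • d)) (Φ' d) t :=
  hΦ.comp_hasDerivAt t (by simpa using ((hasDerivAt_id t).smul_const d).const_add x)

theorem norm_fderiv_fderiv_fderiv_apply_sub_le (f : E → F) (x y u v w : E) :
    ‖fderiv ℝ (fderiv ℝ (fderiv ℝ f)) y u v w - fderiv ℝ (fderiv ℝ (fderiv ℝ f)) x u v w‖
      ≤ ‖iteratedFDeriv ℝ 3 f y - iteratedFDeriv ℝ 3 f x‖ * (‖u‖ * ‖v‖ * ‖w‖) := by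
  have h := (iteratedFDeriv ℝ 3 f y - iteratedFDeriv ℝ 3 f x).le_opNorm ![u, v, w]
  simpa [iteratedFDeriv_three_apply, Fin.prod_univ_three, mul_assoc] using h

theorem ContDiff.hasDerivAt_fderiv_fderiv_apply_line {f : E → F} (hf : ContDiff ℝ 3 f)
    (x h v w : E) (t : ℝ) :
    HasDerivAt (fun s : ℝ => fderiv ℝ (fderiv ℝ f) (x + s • h) v w)
      (fderiv ℝ (fderiv ℝ (fderiv ℝ f)) (x + t • h) h v w) t := by
  have hd : Differentiable ℝ (fderiv ℝ (fderiv ℝ f)) :=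
    ((hf.fderiv_right (m := 2) (by norm_num)).fderiv_right (m := 1) (by norm_num)).differentiable
      (by norm_num)
  simpa using ((HasFDerivAt.hasDerivAt_comp_line (Φ := fderiv ℝ (fderiv ℝ f)) (x := x) (d := h)
    (hd _).hasFDerivAt).clm_apply (hasDerivAt_const t v)).clm_apply (hasDerivAt_const t w)

theorem ContDiff.fderiv_fderiv_fderiv_apply_comm₁₂ {f : E → F} (hf : ContDiff ℝ 3 f)
    (x u v w : E) :
    fderiv ℝ (fderiv ℝ (fderiv ℝ f)) x u v w = fderiv ℝ (fderiv ℝ (fderiv ℝ f)) x v u w :=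
  DFunLike.congr_fun
    ((hf.fderiv_right (m := 2) (by norm_num)).contDiffAt.isSymmSndFDerivAt (by simp) u v) w

theorem ContDiff.fderiv_fderiv_fderiv_apply_comm₂₃ {f : E → F} (hf : ContDiff ℝ 3 f)
    (x u v w : E) :
    fderiv ℝ (fderiv ℝ (fderiv ℝ f)) x u v w = fderiv ℝ (fderiv ℝ (fderiv ℝ f)) x u w v := by
  have hsymm : ∀ y, fderiv ℝ (fderiv ℝ f) y v w = fderiv ℝ (fderiv ℝ f) y w v := fun y =>
    hf.contDiffAt.isSymmSndFDerivAt (by simp; norm_num) v w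
  have h₁ := hf.hasDerivAt_fderiv_fderiv_apply_line x u v w 0
  have h₂ := hf.hasDerivAt_fderiv_fderiv_apply_line x u w v 0
  simp only [hsymm, zero_smul, add_zero] at h₁ h₂
  exact h₁.unique h₂

theorem ConvexOn.fderiv_fderiv_apply_self_nonneg {f : E → ℝ} (hconv : ConvexOn ℝ univ f)
    (hf : ContDiff ℝ 2 f) (x d : E) : 0 ≤ fderiv ℝ (fderiv ℝ f) x d d := by
  have hd₁ : Differentiable ℝ f := hf.differentiable (by norm_num)
  have hd₂ : Differentiable ℝ (fderiv ℝ f) :=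
    (hf.fderiv_right (m := 1) (by norm_num)).differentiable (by norm_num)
  have hline : ∀ t : ℝ, HasDerivAt (fun t : ℝ => f (x + t • d)) (fderiv ℝ f (x + t • d) d) t :=
    fun t => (hd₁ _).hasFDerivAt.hasDerivAt_comp_line
  have hmono : Monotone fun t : ℝ => fderiv ℝ f (x + t • d) d := by
    have hderiv : deriv (fun t : ℝ => f (x + t • d)) = fun t => fderiv ℝ f (x + t • d) d :=
      funext fun t => (hline t).deriv
    rw [← hderiv, ← monotoneOn_univ]
    exact (convexOn_univ_iff_forall_line.mp hconv x d).monotoneOn_deriv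
      fun t _ => (hline t).differentiableAt
  have hD₂ : HasDerivAt (fun t : ℝ => fderiv ℝ f (x + t • d) d)
      (fderiv ℝ (fderiv ℝ f) x d d) 0 := by
    simpa using ((hd₂ _).hasFDerivAt.hasDerivAt_comp_line (t := 0)).clm_apply
      (hasDerivAt_const 0 d)
  simpa [hD₂.deriv] using hmono.deriv_nonneg (x := 0)

theorem ContDiff.fderiv_fderiv_apply_le {f : E → ℝ} (hf : ContDiff ℝ 3 f) {L : ℝ} (hL₀ : 0 ≤ L)
    {x : E} (hL : ∀ y, ‖iteratedFDeriv ℝ 3 f y - iteratedFDeriv ℝ 3 f x‖ ≤ L * ‖y - x‖)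
    (h d : E) :
    fderiv ℝ (fderiv ℝ f) (x + h) d d ≤ fderiv ℝ (fderiv ℝ f) x d d
      + fderiv ℝ (fderiv ℝ (fderiv ℝ f)) x h d d + L * (‖h‖ ^ 2 * ‖d‖ ^ 2) := by
  set c := fderiv ℝ (fderiv ℝ (fderiv ℝ f)) x h d d
  have hG : ∀ s : ℝ, HasDerivAt (fun s : ℝ => fderiv ℝ (fderiv ℝ f) (x + s • h) d d - s * c)
      (fderiv ℝ (fderiv ℝ (fderiv ℝ f)) (x + s • h) h d d - c) s := fun s =>
    (hf.hasDerivAt_fderiv_fderiv_apply_line x h d d s).sub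
      (by simpa using (hasDerivAt_id s).mul_const c)
  have bound : ∀ s ∈ Ico (0 : ℝ) 1,
      ‖fderiv ℝ (fderiv ℝ (fderiv ℝ f)) (x + s • h) h d d - c‖ ≤ L * (‖h‖ ^ 2 * ‖d‖ ^ 2) := by
    intro s ⟨hs₀, hs₁⟩
    calc _ ≤ ‖iteratedFDeriv ℝ 3 f (x + s • h) - iteratedFDeriv ℝ 3 f x‖ * (‖h‖ * ‖d‖ * ‖d‖) :=
          norm_fderiv_fderiv_fderiv_apply_sub_le f x _ h d d
      _ ≤ L * (s * ‖h‖) * (‖h‖ * ‖d‖ * ‖d‖) := by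
          gcongr
          simpa [norm_smul, abs_of_nonneg hs₀] using hL (x + s • h)
      _ ≤ L * (1 * ‖h‖) * (‖h‖ * ‖d‖ * ‖d‖) := by gcongr
      _ = L * (‖h‖ ^ 2 * ‖d‖ ^ 2) := by ring
  have hmvt := norm_image_sub_le_of_norm_deriv_le_segment_01'
    (fun s _ => (hG s).hasDerivWithinAt) bound
  simp only [one_smul, one_mul, zero_smul, add_zero, zero_mul, sub_zero, Real.norm_eq_abs] at hmvt
  linarith [le_abs_self (fderiv ℝ (fderiv ℝ f) (x + h) d d - c - fderiv ℝ (fderiv ℝ f) x d d)]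

end Derivatives

section InnerProduct

variable {E : Type*} [NormedAddCommGroup E] [InnerProductSpace ℝ E]

theorem norm_add_smul_sq (h d : E) (t : ℝ) :
    ‖h + t • d‖ ^ 2 = ‖h‖ ^ 2 + 2 * ⟪h, d⟫ * t + ‖d‖ ^ 2 * t ^ 2 := by
  rw [norm_add_sq_real, real_inner_smul_right, norm_smul, Real.norm_eq_abs, mul_pow, sq_abs]
  ring

theorem convexOn_univ_taylorModel_of_hessian_nonneg {g x₀ : E} {B : E →L[ℝ] E →L[ℝ] ℝ}
    {C : E →L[ℝ] E →L[ℝ] E →L[ℝ] ℝ} {M : ℝ}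
    (hB : ∀ u v, B u v = B v u) (hC₁₂ : ∀ u v w, C u v w = C v u w)
    (hC₂₃ : ∀ u v w, C u v w = C u w v)
    (hHess : ∀ h d, 0 ≤ B d d + C h d d + M * (2 * ⟪h, d⟫ ^ 2 + ‖h‖ ^ 2 * ‖d‖ ^ 2)) :
    ConvexOn ℝ univ fun z => ⟪g, z - x₀⟫ + 1 / 2 * B (z - x₀) (z - x₀)
      + 1 / 6 * C (z - x₀) (z - x₀) (z - x₀) + M / 4 * ‖z - x₀‖ ^ 4 := by
  refine convexOn_univ_iff_forall_line.mpr fun x d => ?_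
  set h := x - x₀
  have hline : ∀ t : ℝ, x + t • d - x₀ = h + t • d := fun t => by simp only [h]; abel
  have hexp : ∀ t : ℝ, ⟪g, h + t • d⟫ + 1 / 2 * B (h + t • d) (h + t • d)
      + 1 / 6 * C (h + t • d) (h + t • d) (h + t • d) + M / 4 * ‖h + t • d‖ ^ 4
      = (⟪g, h⟫ + 1 / 2 * B h h + 1 / 6 * C h h h + M / 4 * ‖h‖ ^ 4)
        + (⟪g, d⟫ + B h d + 1 / 2 * C h h d + M * ‖h‖ ^ 2 * ⟪h, d⟫) * t
        + (1 / 2 * B d d + 1 / 2 * C h d d + M / 2 * (2 * ⟪h, d⟫ ^ 2 + ‖h‖ ^ 2 * ‖d‖ ^ 2)) * t ^ 2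
        + (1 / 6 * C d d d + M * ⟪h, d⟫ * ‖d‖ ^ 2) * t ^ 3 + M / 4 * ‖d‖ ^ 4 * t ^ 4 := fun t => by
    have h4 : ‖h + t • d‖ ^ 4 = (‖h + t • d‖ ^ 2) ^ 2 := by ring
    simp only [h4, norm_add_smul_sq, inner_add_right, real_inner_smul_right, map_add, map_smul,
      add_apply, smul_apply, smul_eq_mul]
    rw [hB d h, hC₂₃ h d h, hC₁₂ d h h, hC₂₃ h d h, hC₁₂ d h d, hC₂₃ d d h, hC₁₂ d h d]
    ring
  simp only [hline, hexp]
  refine convexOn_univ_quartic fun t => ?_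
  have hHess_t := hHess (h + t • d) d
  simp only [inner_add_left, real_inner_smul_left, real_inner_self_eq_norm_sq, norm_add_smul_sq,
    map_add, map_smul, add_apply, smul_apply, smul_eq_mul] at hHess_t
  linarith

theorem ConvexOn.taylorModel_hessian_nonneg {f : E → ℝ} (hconv : ConvexOn ℝ univ f)
    (hf : ContDiff ℝ 3 f) {L M : ℝ} (hM : L ≤ M)
    (hL : ∀ x y, ‖iteratedFDeriv ℝ 3 f x - iteratedFDeriv ℝ 3 f y‖ ≤ L * ‖x - y‖) (x h d : E) :
    0 ≤ fderiv ℝ (fderiv ℝ f) x d d + fderiv ℝ (fderiv ℝ (fderiv ℝ f)) x h d d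
      + M * (2 * ⟪h, d⟫ ^ 2 + ‖h‖ ^ 2 * ‖d‖ ^ 2) := by
  rcases eq_or_ne h 0 with rfl | hh
  · simpa using hconv.fderiv_fderiv_apply_self_nonneg (hf.of_le (by norm_num)) x d
  have hL₀ : 0 ≤ L := by
    have := (norm_nonneg _).trans (hL (x + h) x)
    rw [add_sub_cancel_left] at this
    exact nonneg_of_mul_nonneg_left this (norm_pos_iff.mpr hh)
  have hconvex := hconv.fderiv_fderiv_apply_self_nonneg (hf.of_le (by norm_num)) (x + h) d
  have htaylor := hf.fderiv_fderiv_apply_le hL₀ (fun y => hL y x) h d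
  have hMLhd := mul_le_mul_of_nonneg_right hM (by positivity : 0 ≤ ‖h‖ ^ 2 * ‖d‖ ^ 2)
  have hMhd := mul_nonneg (hL₀.trans hM) (sq_nonneg ⟪h, d⟫)
  nlinarith

end InnerProduct

theorem stmt_12 (n : ℕ) (L M : ℝ) (hM : L ≤ M)
    (f : EuclideanSpace ℝ (Fin n) → ℝ)
    (hconv : ConvexOn ℝ Set.univ f)
    (hf : ContDiff ℝ 3 f)
    (hL : ∀ x y : EuclideanSpace ℝ (Fin n),
      ‖iteratedFDeriv ℝ 3 f x - iteratedFDeriv ℝ 3 f y‖ ≤ L * ‖x - y‖)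
    (xt : EuclideanSpace ℝ (Fin n)) :
    ConvexOn ℝ Set.univ (fun z =>
      ⟪gradient f xt, z - xt⟫
      + (1 / 2) * iteratedFDeriv ℝ 2 f xt (fun _ => z - xt)
      + (1 / 6) * iteratedFDeriv ℝ 3 f xt (fun _ => z - xt)
      + M / 4 * ‖z - xt‖ ^ 4) := by
  have hB : ∀ u v, fderiv ℝ (fderiv ℝ f) xt u v = fderiv ℝ (fderiv ℝ f) xt v u :=
    hf.contDiffAt.isSymmSndFDerivAt (by simp; norm_num)
  simpa only [iteratedFDeriv_two_apply, iteratedFDeriv_three_apply] using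
    convexOn_univ_taylorModel_of_hessian_nonneg (g := gradient f xt) (x₀ := xt) hB
      (hf.fderiv_fderiv_fderiv_apply_comm₁₂ xt) (hf.fderiv_fderiv_fderiv_apply_comm₂₃ xt)
      (hconv.taylorModel_hessian_nonneg hf hM hL xt)
end
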